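/- Let n ≥ 0 and w ≥ 0 be integers, take ℓ = 1, and set λ = −w(w+n+4) − n − 2 and μ = (λ−3)(n+2). Define the polynomials h_0(t) = Σ_{j=0}^{w} [(−w)_j (w+n+4)_j / (j! (n+2)_j)] t^j and h_1(t) = −(n+1) · Σ_{j=0}^{w+1} [(−w−1)_j (w+n+3)_j (λ)_j / (j! (n+1)_j (λ−1)_j)] t^j. Then the pair (h_0, h_1) satisfies system (D') with eigenvalue λ and system (E') with eigenvalue μ for all t ∈ (0,1). -/

import Mathlib

/-!
`h₀ = ₂F₁(-w, w+n+4; n+2; t)` satisfies the hypergeometric equation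
`t(1-t)h₀'' + ((n+2) - (n+5)t)h₀' = (λ+n+2)h₀`, since `(-w)(w+n+4) = λ+n+2`.
Because `λ - 1 = (-w-1)(w+n+3)`, the ratio `(λ)_j / (λ-1)_j` is `1 + j/(λ-1)`, and the coefficients
of `h₁` are contiguous to those of `h₀`: `h₁ = ((n+2)t - (n+1))h₀ - t(1-t)h₀'`. Differentiating
and using the equation gives `h₁' = -λh₀ - th₀'`. After clearing the denominator `1 - t`, every
equation of (D') and (E') is a linear combination of these three identities and the derivative of
the last one.
-/

open Polynomial Finset Nat

section PolynomialODE
variable {R : Type*} [CommRing R]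

theorem coeff_X_mul_derivative (p : R[X]) (j : ℕ) :
    (X * derivative p).coeff j = j * p.coeff j := by
  rcases j with _ | j
  · simp
  · rw [coeff_X_mul, coeff_derivative]
    push_cast
    ring

theorem coeff_sum_range_C_mul_X_pow {f : ℕ → R} {N : ℕ} (hf : ∀ j, N < j → f j = 0) (k : ℕ) :
    (∑ j ∈ range (N + 1), C (f j) * X ^ j).coeff k = f k := by
  simp only [finsetSum_coeff, coeff_C_mul_X_pow, sum_ite_eq, mem_range]
  split_ifs with hk
  · rfl
  · exact (hf k (by omega)).symm

theorem hypergeometric_ode_of_coeff_recurrence {p : R[X]} (α β γ : R)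
    (hrec : ∀ j : ℕ, (j + 1) * (γ + j) * p.coeff (j + 1) = (α + j) * (β + j) * p.coeff j) :
    X * (1 - X) * derivative (derivative p) + (C γ - C (α + β + 1) * X) * derivative p
      - C (α * β) * p = 0 := by
  have coeff_X_sq (j : ℕ) :
      (X * (X * derivative (derivative p))).coeff j = (j - 1) * j * p.coeff j := by
    rcases j with _ | j
    · simp
    · rw [coeff_X_mul, coeff_X_mul_derivative, coeff_derivative]
      push_cast
      ring
  have hsplit : X * (1 - X) * derivative (derivative p) + (C γ - C (α + β + 1) * X)
      * derivative p - C (α * β) * p = X * derivative (derivative p)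
        - X * (X * derivative (derivative p)) + C γ * derivative p
        - C (α + β + 1) * (X * derivative p) - C (α * β) * p := by ring
  ext j
  rw [hsplit]
  simp only [coeff_add, coeff_sub, coeff_C_mul, coeff_X_mul_derivative, coeff_X_sq,
    coeff_derivative, coeff_zero]
  linear_combination hrec j

theorem eq_contiguous_of_coeff {p q : R[X]} (γ : R) (h0 : q.coeff 0 = (1 - γ) * p.coeff 0)
    (hsucc : ∀ j : ℕ, q.coeff (j + 1) = (γ + j) * (p.coeff j - p.coeff (j + 1))) :
    q = (C γ * X - C (γ - 1)) * p - X * (1 - X) * derivative p := by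
  have hsplit : (C γ * X - C (γ - 1)) * p - X * (1 - X) * derivative p
      = C γ * (X * p) - C (γ - 1) * p - X * derivative p + X * (X * derivative p) := by ring
  ext j
  rw [hsplit]
  rcases j with _ | j
  · simp [h0]
    ring
  · simp only [coeff_add, coeff_sub, coeff_C_mul, coeff_X_mul, coeff_X_mul_derivative,
      coeff_derivative, hsucc]
    ring

theorem derivative_eq_of_contiguous {n lam : R} {p q : R[X]}
    (hp : X * (1 - X) * derivative (derivative p) + (C (n + 2) - C (n + 5) * X) * derivative p
      - C (lam + n + 2) * p = 0)
    (hq : q = (C (n + 2) * X - C (n + 1)) * p - X * (1 - X) * derivative p) :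
    derivative q = -C lam * p - X * derivative p := by
  rw [hq]
  simp only [derivative_mul, derivative_sub, derivative_C, derivative_X, derivative_one]
  simp only [map_add, map_one, map_ofNat] at hp ⊢
  linear_combination (-1 : R[X]) * hp

end PolynomialODE

theorem ascPochhammer_succ_eval_left {S : Type*} [CommSemiring S] (j : ℕ) (x : S) :
    (ascPochhammer S (j + 1)).eval x = x * (ascPochhammer S j).eval (x + 1) := by
  simp [ascPochhammer_succ_left, eval_comp]

theorem neg_natCast_sub_one {R : Type*} [Ring R] (w : ℕ) : -(w : R) - 1 = -((w + 1 : ℕ) : R) := by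
  push_cast
  abel

noncomputable def hypergeometric3F2Coefficient {𝕂 : Type*} [Field 𝕂] (a₁ a₂ a₃ b₁ b₂ : 𝕂)
    (j : ℕ) : 𝕂 :=
  (j !⁻¹ : 𝕂) * (ascPochhammer 𝕂 j).eval a₁ * (ascPochhammer 𝕂 j).eval a₂
    * (ascPochhammer 𝕂 j).eval a₃ * ((ascPochhammer 𝕂 j).eval b₁)⁻¹
    * ((ascPochhammer 𝕂 j).eval b₂)⁻¹

section Coefficients
variable {𝕂 : Type*} [Field 𝕂]

theorem ordinaryHypergeometricCoefficient_neg_nat (w : ℕ) (b c : 𝕂) {j : ℕ} (hj : w < j) :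
    ordinaryHypergeometricCoefficient (-(w : 𝕂)) b c j = 0 := by
  simp [ascPochhammer_eval_neg_coe_nat_of_lt hj]

theorem hypergeometric3F2Coefficient_neg_nat (w : ℕ) (a₂ a₃ b₁ b₂ : 𝕂) {j : ℕ} (hj : w < j) :
    hypergeometric3F2Coefficient (-(w : 𝕂)) a₂ a₃ b₁ b₂ j = 0 := by
  simp [hypergeometric3F2Coefficient, ascPochhammer_eval_neg_coe_nat_of_lt hj]

variable [CharZero 𝕂]

theorem ordinaryHypergeometricCoefficient_succ (a b c : 𝕂) (j : ℕ) (hc : c + j ≠ 0) :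
    (j + 1) * (c + j) * ordinaryHypergeometricCoefficient a b c (j + 1)
      = (a + j) * (b + j) * ordinaryHypergeometricCoefficient a b c j := by
  simp only [ordinaryHypergeometricCoefficient, ascPochhammer_succ_eval, factorial_succ,
    cast_mul, cast_succ, mul_inv]
  field_simp

theorem hypergeometric3F2Coefficient_succ {a b c : 𝕂} (hc : ∀ k : ℕ, c + k ≠ 0) (j : ℕ)
    (hab : (ascPochhammer 𝕂 (j + 1)).eval (a * b) ≠ 0) :
    (j + 1) * c * hypergeometric3F2Coefficient a b (a * b + 1) c (a * b) (j + 1)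
      = (a * b + j + 1) * ordinaryHypergeometricCoefficient (a + 1) (b + 1) (c + 1) j := by
  have hj : (j + 1 : 𝕂) ≠ 0 := by exact_mod_cast succ_ne_zero j
  have hfac : (j ! : 𝕂) ≠ 0 := by exact_mod_cast factorial_ne_zero j
  have hc0 : c ≠ 0 := by simpa using hc 0
  have hc1 : (ascPochhammer 𝕂 j).eval (c + 1) ≠ 0 := by
    rw [Ne, ascPochhammer_eval_eq_zero_iff]
    rintro ⟨k, -, hk⟩
    exact hc (k + 1) (by push_cast; linear_combination hk)
  have hshift : a * b * (ascPochhammer 𝕂 (j + 1)).eval (a * b + 1)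
      = (ascPochhammer 𝕂 (j + 1)).eval (a * b) * (a * b + j + 1) := by
    rw [← ascPochhammer_succ_eval_left, ascPochhammer_succ_eval]
    push_cast
    ring
  simp only [hypergeometric3F2Coefficient, ordinaryHypergeometricCoefficient,
    ascPochhammer_succ_eval_left j a, ascPochhammer_succ_eval_left j b,
    ascPochhammer_succ_eval_left j c, factorial_succ, cast_mul, cast_succ]
  field_simp
  linear_combination (ascPochhammer 𝕂 j).eval (a + 1) * (ascPochhammer 𝕂 j).eval (b + 1) * hshift

theorem hypergeometric3F2Coefficient_contiguous {a b c : 𝕂} (habc : a + b = c + 1)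
    (hc : ∀ k : ℕ, c + k ≠ 0) (j : ℕ) (hab : (ascPochhammer 𝕂 (j + 1)).eval (a * b) ≠ 0) :
    c * hypergeometric3F2Coefficient a b (a * b + 1) c (a * b) (j + 1)
      = (c + 1 + j) * (ordinaryHypergeometricCoefficient (a + 1) (b + 1) (c + 1) (j + 1)
        - ordinaryHypergeometricCoefficient (a + 1) (b + 1) (c + 1) j) := by
  have hj : (j + 1 : 𝕂) ≠ 0 := by exact_mod_cast succ_ne_zero j
  have hF := ordinaryHypergeometricCoefficient_succ (a + 1) (b + 1) (c + 1) j
    (by convert hc (j + 1) using 1; push_cast; ring)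
  have hG := hypergeometric3F2Coefficient_succ hc j hab
  apply mul_left_cancel₀ hj
  linear_combination hG - hF
    - (j + 1) * ordinaryHypergeometricCoefficient (a + 1) (b + 1) (c + 1) j * habc

end Coefficients

theorem deriv_polynomial_eval {𝕜 : Type*} [NontriviallyNormedField 𝕜] (p : 𝕜[X]) :
    deriv (fun x => p.eval x) = fun x => (derivative p).eval x :=
  funext fun _ => p.deriv

/- Systems (D') and (E') for `ℓ = 1`. At `i = 0` the term `h (i - 1)` is `h 0` (truncated
subtraction), and at `i = 1` the term `h (i + 1)` is `h 2`; both carry the coefficient `0`. -/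
def SolvesSystemD (n : ℕ) (lam : ℝ) (h : ℕ → ℝ → ℝ) : Prop :=
  ∀ i ≤ 1, ∀ t : ℝ, 0 < t → t < 1 →
    t * (1 - t) * deriv (deriv (h i)) t
      - (((n : ℝ) + 1 - i + 3) * t - ((n : ℝ) + 1 - i + 1)) * deriv (h i) t
      + ((1 : ℝ) - i) * ((i : ℝ) + 1) * (h (i + 1) t - h i t) / (1 - t)
      - (i : ℝ) * ((1 : ℝ) - i + 1) * t * (h i t - h (i - 1) t) / (1 - t)
      = lam * h i t

def SolvesSystemE (n : ℕ) (mu : ℝ) (h : ℕ → ℝ → ℝ) : Prop :=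
  ∀ i ≤ 1, ∀ t : ℝ, 0 < t → t < 1 →
    ((n : ℝ) - 1 + 3 * i) * t * (1 - t) * deriv (deriv (h i)) t
      - 3 * ((i : ℝ) + 1) * ((1 : ℝ) - i) * deriv (h (i + 1)) t
      + ((n : ℝ) - 1 + 3 * i) * (((n : ℝ) + 1 - i + 1) - ((n : ℝ) + 1 - i + 3) * t)
          * deriv (h i) t
      + 3 * (i : ℝ) * ((1 : ℝ) - i + 1) * t * deriv (h (i - 1)) t
      + ((n : ℝ) + 2 - 3 * i) * ((i : ℝ) + 1) * ((1 : ℝ) - i)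
          * (h (i + 1) t - h i t) / (1 - t)
      - ((n : ℝ) + 2 - 3 * i) * (i : ℝ) * ((1 : ℝ) - i + 1)
          * (h i t - h (i - 1) t) / (1 - t)
      - (2 * (n : ℝ) + 1 + 3) * (i : ℝ) * ((1 : ℝ) - i + 1) * (h i t - h (i - 1) t)
      = mu * h i t

theorem solvesSystems_of_contiguous {n : ℕ} {lam : ℝ} {p q : ℝ[X]} {h : ℕ → ℝ → ℝ}
    (hp : X * (1 - X) * derivative (derivative p) + (C ((n : ℝ) + 2) - C ((n : ℝ) + 5) * X)
      * derivative p - C (lam + n + 2) * p = 0)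
    (hq : q = (C ((n : ℝ) + 2) * X - C ((n : ℝ) + 1)) * p - X * (1 - X) * derivative p)
    (h0 : ∀ t, h 0 t = p.eval t) (h1 : ∀ t, h 1 t = q.eval t) :
    SolvesSystemD n lam h ∧ SolvesSystemE n ((lam - 3) * (n + 2)) h := by
  have hq' := derivative_eq_of_contiguous hp hq
  have hq'' : derivative (derivative q)
      = -C (lam + 1) * derivative p - X * derivative (derivative p) := by
    rw [hq']
    simp only [derivative_mul, derivative_sub, derivative_neg, derivative_C, derivative_X,
      map_add, map_one]
    ring
  have ep (t : ℝ) := congrArg (eval t) hp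
  have eq (t : ℝ) := congrArg (eval t) hq
  have eq' (t : ℝ) := congrArg (eval t) hq'
  have eq'' (t : ℝ) := congrArg (eval t) hq''
  simp only [eval_add, eval_sub, eval_mul, eval_C, eval_X, eval_one, eval_neg, eval_zero]
    at ep eq eq' eq''
  refine ⟨fun i hi t _ ht1 => ?_, fun i hi t _ ht1 => ?_⟩ <;>
    interval_cases i <;>
    simp only [Nat.reduceAdd, Nat.zero_sub, Nat.sub_self, Nat.cast_zero, Nat.cast_one, funext h0,
      funext h1, deriv_polynomial_eval] <;>
    field_simp [sub_ne_zero.2 ht1.ne']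
  · linear_combination (1 - t) * ep t + eq t
  · linear_combination -t * (1 - t) * ep t + (-t - lam * (1 - t)) * eq t
      + ((n + 1) - (n + 3) * t) * (1 - t) * eq' t + t * (1 - t) ^ 2 * eq'' t
  · linear_combination (n - 1) * (1 - t) * ep t + (n + 2) * eq t - 3 * (1 - t) * eq' t
  · linear_combination -(n + 2) * t * (1 - t) * ep t
      + (-(n - 1) - (2 * n + 4) * (1 - t) - (lam - 3) * (n + 2) * (1 - t)) * eq t
      + (n + 2) * ((n + 1) - (n + 3) * t) * (1 - t) * eq' t + (n + 2) * t * (1 - t) ^ 2 * eq'' t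

noncomputable def h₀Poly (n w : ℕ) : ℝ[X] :=
  ∑ j ∈ range (w + 1),
    C (ordinaryHypergeometricCoefficient (-(w : ℝ)) (w + n + 4) (n + 2) j) * X ^ j

noncomputable def h₁Poly (n w : ℕ) (lam : ℝ) : ℝ[X] :=
  ∑ j ∈ range (w + 2), C (-(n + 1) * hypergeometric3F2Coefficient (-(w : ℝ) - 1) (w + n + 3)
    lam (n + 1) (lam - 1) j) * X ^ j

section Specialization
variable {n w : ℕ} {lam : ℝ}

theorem coeff_h₀Poly (j : ℕ) :
    (h₀Poly n w).coeff j = ordinaryHypergeometricCoefficient (-(w : ℝ)) (w + n + 4) (n + 2) j :=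
  coeff_sum_range_C_mul_X_pow (fun _ hj => ordinaryHypergeometricCoefficient_neg_nat w _ _ hj) j

theorem coeff_h₁Poly (j : ℕ) :
    (h₁Poly n w lam).coeff j = -(n + 1) * hypergeometric3F2Coefficient (-(w : ℝ) - 1)
      (w + n + 3) lam (n + 1) (lam - 1) j :=
  coeff_sum_range_C_mul_X_pow (fun _ hj => by
    rw [neg_natCast_sub_one, hypergeometric3F2Coefficient_neg_nat (w + 1) _ _ _ _ hj,
      mul_zero]) j

theorem h₀Poly_ode (hlam : lam = -(w : ℝ) * ((w : ℝ) + n + 4) - n - 2) :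
    X * (1 - X) * derivative (derivative (h₀Poly n w))
      + (C ((n : ℝ) + 2) - C ((n : ℝ) + 5) * X) * derivative (h₀Poly n w)
      - C (lam + n + 2) * h₀Poly n w = 0 := by
  have h := hypergeometric_ode_of_coeff_recurrence (p := h₀Poly n w) (-(w : ℝ)) (w + n + 4)
    (n + 2) fun j => by
      simp only [coeff_h₀Poly]
      exact ordinaryHypergeometricCoefficient_succ _ _ _ j (by positivity)
  rwa [show -(w : ℝ) + (w + n + 4) + 1 = n + 5 by ring,
    show -(w : ℝ) * (w + n + 4) = lam + n + 2 by rw [hlam]; ring] at h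

theorem coeff_h₁Poly_succ (hlam : lam = -(w : ℝ) * ((w : ℝ) + n + 4) - n - 2) (j : ℕ) :
    (h₁Poly n w lam).coeff (j + 1)
      = ((n : ℝ) + 2 + j) * ((h₀Poly n w).coeff j - (h₀Poly n w).coeff (j + 1)) := by
  rw [coeff_h₁Poly, coeff_h₀Poly, coeff_h₀Poly]
  rcases lt_or_ge w j with hj | hj
  · rw [neg_natCast_sub_one, hypergeometric3F2Coefficient_neg_nat (w + 1) _ _ _ _ (by omega),
      ordinaryHypergeometricCoefficient_neg_nat w _ _ hj,
      ordinaryHypergeometricCoefficient_neg_nat w _ _ (by omega)]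
    ring
  have hlam_sub_one : lam - 1 = (-(w : ℝ) - 1) * (w + n + 3) := by
    rw [hlam]
    ring
  have hpoch : (ascPochhammer ℝ (j + 1)).eval ((-(w : ℝ) - 1) * (w + n + 3)) ≠ 0 := by
    rw [Ne, ascPochhammer_eval_eq_zero_iff]
    rintro ⟨k, hk, hk'⟩
    have : (k : ℝ) ≤ w := by exact_mod_cast (by omega : k ≤ w)
    nlinarith [(n.cast_nonneg : (0 : ℝ) ≤ n), (w.cast_nonneg : (0 : ℝ) ≤ w)]
  have h := hypergeometric3F2Coefficient_contiguous (c := (n : ℝ) + 1) (by ring)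
    (fun k => by positivity) j hpoch
  rw [show -(w : ℝ) - 1 + 1 = -w by ring, show (w : ℝ) + n + 3 + 1 = w + n + 4 by ring,
    show (n : ℝ) + 1 + 1 = n + 2 by ring] at h
  rw [hlam_sub_one, show lam = (-(w : ℝ) - 1) * (w + n + 3) + 1 by linear_combination hlam_sub_one]
  linear_combination -h

theorem h₁Poly_eq (hlam : lam = -(w : ℝ) * ((w : ℝ) + n + 4) - n - 2) :
    h₁Poly n w lam = (C ((n : ℝ) + 2) * X - C ((n : ℝ) + 1)) * h₀Poly n w
      - X * (1 - X) * derivative (h₀Poly n w) := by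
  have h0 : (h₁Poly n w lam).coeff 0 = (1 - ((n : ℝ) + 2)) * (h₀Poly n w).coeff 0 := by
    simp [coeff_h₁Poly, coeff_h₀Poly, hypergeometric3F2Coefficient,
      ordinaryHypergeometricCoefficient]
    ring
  have h := eq_contiguous_of_coeff ((n : ℝ) + 2) h0 (coeff_h₁Poly_succ hlam)
  rwa [show (n : ℝ) + 2 - 1 = n + 1 by ring] at h

end Specialization

/-- Case `ℓ = 1`, `k = 1`, `n ≥ 0`: with `λ = −w(w+n+4) − n − 2` and `μ = (λ−3)(n+2)`,
the pair `h₀(t) = ₂F₁(−w, w+n+4; n+2; t)` and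
`h₁(t) = −(n+1) · ₃F₂(−w−1, w+n+3, λ; n+1, λ−1; t)`
satisfies system (D′) with eigenvalue `λ` and system (E′) with eigenvalue `μ` on `(0,1)`. -/
theorem stmt14 (n w : ℕ) (lam mu : ℝ)
    (hlam : lam = -(w : ℝ) * ((w : ℝ) + n + 4) - n - 2)
    (hmu : mu = (lam - 3) * ((n : ℝ) + 2))
    (h : ℕ → ℝ → ℝ)
    (h0def : ∀ t : ℝ, h 0 t =
      ∑ j ∈ Finset.range (w + 1),
        ((ascPochhammer ℝ j).eval (-(w : ℝ)) * (ascPochhammer ℝ j).eval ((w : ℝ) + n + 4))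
          / ((j.factorial : ℝ) * (ascPochhammer ℝ j).eval ((n : ℝ) + 2)) * t ^ j)
    (h1def : ∀ t : ℝ, h 1 t =
      -((n : ℝ) + 1) *
        ∑ j ∈ Finset.range (w + 2),
          ((ascPochhammer ℝ j).eval (-(w : ℝ) - 1) * (ascPochhammer ℝ j).eval ((w : ℝ) + n + 3)
              * (ascPochhammer ℝ j).eval lam)
            / ((j.factorial : ℝ) * (ascPochhammer ℝ j).eval ((n : ℝ) + 1)
              * (ascPochhammer ℝ j).eval (lam - 1)) * t ^ j) :
    (∀ i ≤ 1, ∀ t : ℝ, 0 < t → t < 1 →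
      t * (1 - t) * deriv (deriv (h i)) t
        - (((n : ℝ) + 1 - i + 3) * t - ((n : ℝ) + 1 - i + 1)) * deriv (h i) t
        + ((1 : ℝ) - i) * ((i : ℝ) + 1) * (h (i + 1) t - h i t) / (1 - t)
        - (i : ℝ) * ((1 : ℝ) - i + 1) * t * (h i t - h (i - 1) t) / (1 - t)
        = lam * h i t) ∧
    (∀ i ≤ 1, ∀ t : ℝ, 0 < t → t < 1 →
      ((n : ℝ) - 1 + 3 * i) * t * (1 - t) * deriv (deriv (h i)) t
        - 3 * ((i : ℝ) + 1) * ((1 : ℝ) - i) * deriv (h (i + 1)) t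
        + ((n : ℝ) - 1 + 3 * i) * (((n : ℝ) + 1 - i + 1) - ((n : ℝ) + 1 - i + 3) * t)
            * deriv (h i) t
        + 3 * (i : ℝ) * ((1 : ℝ) - i + 1) * t * deriv (h (i - 1)) t
        + ((n : ℝ) + 2 - 3 * i) * ((i : ℝ) + 1) * ((1 : ℝ) - i)
            * (h (i + 1) t - h i t) / (1 - t)
        - ((n : ℝ) + 2 - 3 * i) * (i : ℝ) * ((1 : ℝ) - i + 1)
            * (h i t - h (i - 1) t) / (1 - t)
        - (2 * (n : ℝ) + 1 + 3) * (i : ℝ) * ((1 : ℝ) - i + 1) * (h i t - h (i - 1) t)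
        = mu * h i t) := by
  subst hmu
  refine solvesSystems_of_contiguous (h₀Poly_ode hlam) (h₁Poly_eq hlam) (fun t => ?_) (fun t => ?_)
  · rw [h0def, h₀Poly, eval_finsetSum]
    refine sum_congr rfl fun j _ => ?_
    simp only [eval_mul, eval_C, eval_pow, eval_X, ordinaryHypergeometricCoefficient]
    ring
  · rw [h1def, h₁Poly, eval_finsetSum, mul_sum]
    refine sum_congr rfl fun j _ => ?_
    simp only [eval_mul, eval_C, eval_pow, eval_X, hypergeometric3F2Coefficient]
    ring
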